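/- Let γ = (γ₁,γ₂,γ₃) : [a,b] → ℝ³ be a Euclidean C²-smooth regular curve and t ∈ [a,b] a point with ω(γ̇(t)) = 0 and (d/dt)ω(γ̇(t)) ≠ 0. Then the limit as L → +∞ of k^{L,∇²}_γ(t)/√L exists and equals |(d/dt)ω(γ̇(t))| / (γ̇₁(t)² + γ̇₂(t)²), where k^{L,∇²}_γ is the curvature associated to the adapted connection. -/
import Mathlib

open Filter Real Topology

theorem curvature_limit_adapted_horizontal_nondeg
    (γ₁ γ₂ γ₃ ω : ℝ → ℝ) (k : ℝ → ℝ → ℝ) (a b t : ℝ)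
    (ht : t ∈ Set.Icc a b)
    (hγ : ContDiffOn ℝ 2 (fun s => (γ₁ s, γ₂ s, γ₃ s)) (Set.Icc a b))
    (hreg : ∀ s ∈ Set.Icc a b, ¬ (deriv γ₁ s = 0 ∧ deriv γ₂ s = 0 ∧ deriv γ₃ s = 0))
    (hω : ∀ s, ω s = deriv γ₃ s + (1/2) * (γ₂ s * deriv γ₁ s - γ₁ s * deriv γ₂ s))
    (hk : ∀ L s, k L s = Real.sqrt (((deriv (deriv γ₁) s)^2 + (deriv (deriv γ₂) s)^2 + L * (deriv ω s)^2) / ((deriv γ₁ s)^2 + (deriv γ₂ s)^2 + L * (ω s)^2)^2 - (deriv γ₁ s * deriv (deriv γ₁) s + deriv γ₂ s * deriv (deriv γ₂) s + L * ω s * deriv ω s)^2 / ((deriv γ₁ s)^2 + (deriv γ₂ s)^2 + L * (ω s)^2)^3))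
    (h0 : ω t = 0) (h1 : deriv ω t ≠ 0) :
    Filter.Tendsto (fun L => k L t / Real.sqrt L) Filter.atTop
      (nhds (|deriv ω t| / ((deriv γ₁ t)^2 + (deriv γ₂ t)^2))) := by
  set p := (deriv γ₁ t)^2 + (deriv γ₂ t)^2 with hpdef
  set A := (deriv (deriv γ₁) t)^2 + (deriv (deriv γ₂) t)^2 with hAdef
  set B := deriv γ₁ t * deriv (deriv γ₁) t + deriv γ₂ t * deriv (deriv γ₂) t with hBdef
  set d := deriv ω t with hddef
  have hp : 0 < p := by
    rcases eq_or_ne (deriv γ₁ t) 0 with h1' | h1'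
    · rcases eq_or_ne (deriv γ₂ t) 0 with h2' | h2'
      · exfalso
        apply hreg t ht
        refine ⟨h1', h2', ?_⟩
        have := hω t
        rw [h1', h2', h0] at this
        linarith
      · have : 0 < (deriv γ₂ t)^2 := by positivity
        nlinarith [sq_nonneg (deriv γ₁ t)]
    · have : 0 < (deriv γ₁ t)^2 := by positivity
      nlinarith [sq_nonneg (deriv γ₂ t)]
  have hp0 : p ≠ 0 := ne_of_gt hp
  have heq : ∀ᶠ L in atTop, k L t / Real.sqrt L =
      Real.sqrt (A / (p^2 * L) + d^2 / p^2 - B^2 / (p^3 * L)) := by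
    filter_upwards [eventually_gt_atTop (0:ℝ)] with L hL
    have hLn : L ≠ 0 := ne_of_gt hL
    rw [hk, h0]
    have hX : (A + L * d^2) / (p + L * 0^2)^2
        - (B + L * 0 * d)^2 / (p + L * 0^2)^3
        = (A / (p^2 * L) + d^2 / p^2 - B^2 / (p^3 * L)) * L := by
      field_simp
      ring
    rw [hX, Real.sqrt_mul' _ hL.le, mul_div_assoc,
      div_self (Real.sqrt_ne_zero'.mpr hL), mul_one]
  have hlim : Tendsto (fun L : ℝ => A / (p^2 * L) + d^2 / p^2 - B^2 / (p^3 * L))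
      atTop (nhds (0 + d^2 / p^2 - 0)) := by
    refine Tendsto.sub (Tendsto.add ?_ tendsto_const_nhds) ?_
    · exact Tendsto.div_atTop tendsto_const_nhds
        (Tendsto.const_mul_atTop (by positivity) tendsto_id)
    · exact Tendsto.div_atTop tendsto_const_nhds
        (Tendsto.const_mul_atTop (by positivity) tendsto_id)
  have hsq : Tendsto (fun L : ℝ => Real.sqrt (A / (p^2 * L) + d^2 / p^2 - B^2 / (p^3 * L)))
      atTop (nhds (Real.sqrt (0 + d^2 / p^2 - 0))) :=
    (Real.continuous_sqrt.continuousAt).tendsto.comp hlim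
  have hval : Real.sqrt (0 + d^2 / p^2 - 0) = |d| / p := by
    rw [zero_add, sub_zero, ← div_pow, Real.sqrt_sq_eq_abs, abs_div, abs_of_pos hp]
  exact Tendsto.congr' (heq.mono fun L h => h.symm) (hval ▸ hsq)
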